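/- Let P = {U^1,...,U^k} be a k-partition of V=(V_1,...,V_r) with |V_j|=n, and let H be a K_r-divisible graph on V. Define the excess multigraph EM(H) on the vertex set {w^i_j : 1≤i≤k, 1≤j≤r} (with w^{i_1}_{j_1}w^{i_2}_{j_2} an edge of the underlying complete multipartite graph iff j_1≠j_2) by giving the pair w^{i_1}_{j_1}w^{i_2}_{j_2} multiplicity e_H(U^{i_1}_{j_1},U^{i_2}_{j_2}) − min{e_H(U^{i_1}_j,U^{i_2}_{j'}) : j≠j'}. Then EM(H) is K_r-divisible: for every vertex w^{i_1}_{j_1} and all j_2,j_3≠j_1, the total multiplicity of edges from w^{i_1}_{j_1} to {w^i_{j_2} : 1≤i≤k} equals that to {w^i_{j_3} : 1≤i≤k}. -/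
import Mathlib

open Finset

/-- The degree of `v` into the vertex set `A`. -/
noncomputable def fdeg {β : Type*} (G : SimpleGraph β) (v : β) (A : Finset β) : ℕ :=
  ((A : Set β) ∩ G.neighborSet v).ncard

open scoped Classical in
lemma fdeg_eq {β : Type*} (G : SimpleGraph β) (v : β) (A : Finset β) :
    fdeg G v A = (A.filter (fun w => G.Adj v w)).card := by
  classical
  rw [fdeg, ← Set.ncard_coe_finset]
  congr 1
  ext w
  simp [SimpleGraph.mem_neighborSet, and_comm]

/-- Let `P = {U 1, ..., U k}` be a `k`-partition of `V = (V 1, ..., V r)` and `H` a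
`K_r`-divisible graph.  Let `E i₁ j₁ i₂ j₂ = e_H(U i₁ ∩ V j₁, U i₂ ∩ V j₂)` and let
`M i₁ i₂` be the minimum of `E i₁ j i₂ j'` over `j ≠ j'`.  Then the excess multigraph,
whose edge `w^{i₁}_{j₁} w^{i₂}_{j₂}` has multiplicity `E i₁ j₁ i₂ j₂ - M i₁ i₂`, is
`K_r`-divisible: for every `i₁, j₁` and all `j₂, j₃ ≠ j₁` the total multiplicity from
`w^{i₁}_{j₁}` into the classes `j₂` and `j₃` agree. -/
theorem stmt8 {β : Type*} [Fintype β] [DecidableEq β] {r k n : ℕ} (hr : 3 ≤ r)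
    (V : Fin r → Finset β) (U : Fin k → Finset β) (H : SimpleGraph β)
    (hVdisj : ∀ j₁ j₂ : Fin r, j₁ ≠ j₂ → Disjoint (V j₁) (V j₂))
    (hVcov : ∀ x : β, ∃ j, x ∈ V j)
    (hVcard : ∀ j, (V j).card = n)
    (hUpart : ∀ x : β, ∃! i, x ∈ U i)
    (hdiv : ∀ j₁ j₂ : Fin r, ∀ v : β, v ∉ V j₁ → v ∉ V j₂ →
      fdeg H v (V j₁) = fdeg H v (V j₂))
    (E : Fin k → Fin r → Fin k → Fin r → ℕ)
    (hE : ∀ i₁ j₁ i₂ j₂, E i₁ j₁ i₂ j₂ = ∑ x ∈ U i₁ ∩ V j₁, fdeg H x (U i₂ ∩ V j₂))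
    (M : Fin k → Fin k → ℕ)
    (hM : ∀ i₁ i₂, IsLeast {c : ℕ | ∃ j j' : Fin r, j ≠ j' ∧ c = E i₁ j i₂ j'} (M i₁ i₂)) :
    ∀ (i₁ : Fin k) (j₁ j₂ j₃ : Fin r), j₂ ≠ j₁ → j₃ ≠ j₁ →
      (∑ i : Fin k, (E i₁ j₁ i j₂ - M i₁ i)) = ∑ i : Fin k, (E i₁ j₁ i j₃ - M i₁ i) := by
  classical
  intro i₁ j₁ j₂ j₃ hj₂ hj₃
  -- key: sums over i of fdeg into U i ∩ V j equal fdeg into V j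
  have key : ∀ (x : β) (j : Fin r), (∑ i : Fin k, fdeg H x (U i ∩ V j)) = fdeg H x (V j) := by
    intro x j
    simp only [fdeg_eq]
    rw [← Finset.card_biUnion]
    · congr 1
      ext w
      simp only [Finset.mem_biUnion, Finset.mem_univ, true_and, Finset.mem_filter,
        Finset.mem_inter]
      constructor
      · rintro ⟨i, ⟨⟨-, hw⟩, ha⟩⟩; exact ⟨hw, ha⟩
      · rintro ⟨hw, ha⟩
        obtain ⟨i, hi, -⟩ := hUpart w
        exact ⟨i, ⟨hi, hw⟩, ha⟩
    · intro a _ b _ hab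
      refine Finset.disjoint_filter_filter ?_
      refine Finset.disjoint_left.mpr ?_
      intro w hwa hwb
      have ha := (Finset.mem_inter.mp hwa).1
      have hb := (Finset.mem_inter.mp hwb).1
      obtain ⟨i, -, huniq⟩ := hUpart w
      exact hab ((huniq a ha).trans (huniq b hb).symm)
  have hsum : ∀ j : Fin r, j ≠ j₁ →
      (∑ i : Fin k, E i₁ j₁ i j) = ∑ x ∈ U i₁ ∩ V j₁, fdeg H x (V j) := by
    intro j hj
    simp only [hE]
    rw [Finset.sum_comm]
    exact Finset.sum_congr rfl fun x _ => key x j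
  have hEsum : (∑ i : Fin k, E i₁ j₁ i j₂) = ∑ i : Fin k, E i₁ j₁ i j₃ := by
    rw [hsum j₂ hj₂, hsum j₃ hj₃]
    refine Finset.sum_congr rfl fun x hx => ?_
    have hx₁ : x ∈ V j₁ := (Finset.mem_inter.mp hx).2
    have h₂ : x ∉ V j₂ := fun h => Finset.disjoint_left.mp (hVdisj j₂ j₁ hj₂) h hx₁
    have h₃ : x ∉ V j₃ := fun h => Finset.disjoint_left.mp (hVdisj j₃ j₁ hj₃) h hx₁
    exact hdiv j₂ j₃ x h₂ h₃
  have hle : ∀ (j : Fin r), j ≠ j₁ → ∀ i, M i₁ i ≤ E i₁ j₁ i j := by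
    intro j hj i
    exact (hM i₁ i).2 ⟨j₁, j, hj.symm, rfl⟩
  have h2 := Finset.sum_tsub_distrib (s := Finset.univ) (f := fun i => E i₁ j₁ i j₂)
    (g := fun i => M i₁ i) (fun i _ => hle j₂ hj₂ i)
  have h3 := Finset.sum_tsub_distrib (s := Finset.univ) (f := fun i => E i₁ j₁ i j₃)
    (g := fun i => M i₁ i) (fun i _ => hle j₃ hj₃ i)
  rw [h2, h3, hEsum]
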